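/- arXiv:1704.08110 — 3 statements merged into one kernel-verified Lean document; each statement's English description precedes it below -/
import Mathlib

section
/- Let L be a field of prime characteristic p and R = L[y_1, …, y_n] the polynomial ring in n variables over L. Then for every integer m > 0, R is flat as an R-module via restriction of scalars along f^m, where f : R → R is the Frobenius endomorphism (f(a) = a^p) and f^m is its m-fold composite. -/
/-!
Write `q = p ^ m` and `φ` for the Frobenius of `K`. The identity `f ^ q = map φ^m (expand q f)`
factors the `m`-th Frobenius of `K[σ]` as `expand q` followed by `map φ^m`. The latter is the base
change of `φ^m` along `K → K[σ]`, hence flat when `φ^m` is, e.g. when `K` is a field. The former is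
flat because `K[σ]` is free over its subalgebra `K[X_i ^ q]`, with basis the monomials `X^e` with
all `e i < q` (divide exponents by `q` with remainder).
-/

/-- `FrobIter R p n` is the ring `R` regarded as a module over itself by restriction of
scalars along the `n`-fold composite `f^n : a ↦ a ^ (p ^ n)` of the Frobenius endomorphism
`f : a ↦ a ^ p`, i.e. `r • m = r ^ (p ^ n) * m`. -/
def FrobIter (R : Type*) [CommRing R] (p n : ℕ) [ExpChar R p] : Type _ := R

instance (R : Type*) [CommRing R] (p n : ℕ) [ExpChar R p] :
    AddCommGroup (FrobIter R p n) := inferInstanceAs (AddCommGroup R)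

instance (R : Type*) [CommRing R] (p n : ℕ) [ExpChar R p] :
    Module R (FrobIter R p n) := Module.compHom R (iterateFrobenius R p n)

theorem RingHom.Flat.of_field {K S : Type*} [Field K] [CommRing S] (f : K →+* S) : f.Flat :=
  letI := f.toAlgebra
  Module.Flat.of_free

theorem RingHom.Flat.mvPolynomialMap {σ K L : Type*} [CommRing K] [CommRing L] {f : K →+* L}
    (hf : f.Flat) : (MvPolynomial.map (σ := σ) f).Flat := by
  algebraize [f]
  let := MvPolynomial.algebraMvPolynomial (σ := σ) (R := K) (S := L)
  exact Module.Flat.isBaseChange K (MvPolynomial σ K) L (MvPolynomial σ L)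
    (Algebra.IsPushout.out (R := K) (S := MvPolynomial σ K))

namespace MvPolynomial

variable {σ K : Type*} [CommRing K] {q : ℕ}

theorem coeff_smul_add_expand_mul_monomial_self (hq : 0 < q) (r : MvPolynomial σ K)
    (a e : σ →₀ ℕ) : coeff (q • a + e) (expand q r * monomial e 1) = coeff a r := by
  rw [coeff_mul_monomial, mul_one, coeff_expand_smul _ hq.ne']

theorem coeff_smul_add_expand_mul_monomial_of_ne {e e' : σ →₀ ℕ} (he : ∀ i, e i < q)
    (he' : ∀ i, e' i < q) (hne : e' ≠ e) (r : MvPolynomial σ K) (a : σ →₀ ℕ) :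
    coeff (q • a + e) (expand q r * monomial e' 1) = 0 := by
  classical
  rw [coeff_mul_monomial']
  split_ifs with hle
  · obtain ⟨i, hi⟩ : ∃ i, e' i ≠ e i := by simpa [Finsupp.ext_iff] using hne
    rw [coeff_expand_of_not_dvd _ (i := i), zero_mul]
    rintro ⟨k, hk⟩
    have hle := hle i
    simp only [Finsupp.coe_tsub, Finsupp.coe_add, Finsupp.coe_smul, Pi.sub_apply, Pi.add_apply,
      Pi.smul_apply, smul_eq_mul] at hk hle
    have hmod := congrArg (· % q) (show q * a i + e i = q * k + e' i by omega)
    simp only [Nat.mul_add_mod, Nat.mod_eq_of_lt (he i), Nat.mod_eq_of_lt (he' i)] at hmod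
    exact hi hmod.symm
  · rfl

theorem monomial_eq_expand_mul_monomial (q : ℕ) (d : σ →₀ ℕ) (c : K) :
    monomial d c = expand q (monomial (d.mapRange (· / q) (Nat.zero_div q)) c) *
      monomial (d.mapRange (· % q) (Nat.zero_mod q)) 1 := by
  rw [expand_monomial, monomial_mul, mul_one]
  congr 2
  ext i
  simp [Nat.div_add_mod]

theorem free_range_expand (hq : 0 < q) :
    Module.Free (expand q : MvPolynomial σ K →ₐ[K] _).range (MvPolynomial σ K) := by
  let v : {e : σ →₀ ℕ // ∀ i, e i < q} → MvPolynomial σ K := fun e => monomial e.1 1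
  have hli : LinearIndependent (expand q : MvPolynomial σ K →ₐ[K] _).range v := by
    rw [linearIndependent_iff']
    intro s g hg e hes
    choose r hr using fun e => (AlgHom.mem_range _).mp (g e).2
    simp only [Subalgebra.smul_def, smul_eq_mul, ← hr] at hg
    suffices r e = 0 by ext1; rw [← hr, this, map_zero, ZeroMemClass.coe_zero]
    ext a
    have := congrArg (coeff (q • a + e.1)) hg
    rwa [coeff_sum, Finset.sum_eq_single e, coeff_smul_add_expand_mul_monomial_self hq] at this
    · exact fun e' _ hne => coeff_smul_add_expand_mul_monomial_of_ne e.2 e'.2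
        (Subtype.coe_ne_coe.mpr hne) _ _
    · exact fun h => absurd hes h
  have hspan : ⊤ ≤ Submodule.span (expand q : MvPolynomial σ K →ₐ[K] _).range (Set.range v) := by
    rintro f -
    rw [f.as_sum]
    refine Submodule.sum_mem _ fun d _ => ?_
    rw [monomial_eq_expand_mul_monomial q]
    exact Submodule.smul_mem _ ((expand q).rangeRestrict _)
      (Submodule.subset_span ⟨⟨_, fun i => Nat.mod_lt (d i) hq⟩, rfl⟩)
  exact Module.Free.of_basis (Module.Basis.mk hli hspan)

theorem flat_expand (hq : 0 < q) : (expand q : MvPolynomial σ K →ₐ[K] _).toRingHom.Flat := by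
  have := free_range_expand (σ := σ) (K := K) hq
  let e := AlgEquiv.ofInjective _ (expand_injective (R := K) (σ := σ) hq)
  have hfactor : (expand q : MvPolynomial σ K →ₐ[K] _).toRingHom =
      (algebraMap (expand q : MvPolynomial σ K →ₐ[K] _).range _).comp e.toRingEquiv.toRingHom :=
    rfl
  rw [hfactor]
  exact (RingHom.Flat.of_bijective e.bijective).comp (RingHom.flat_algebraMap_iff.mpr inferInstance)

theorem flat_iterateFrobenius (p m : ℕ) [ExpChar K p] (h : (iterateFrobenius K p m).Flat) :
    (iterateFrobenius (MvPolynomial σ K) p m).Flat := by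
  have hfactor : iterateFrobenius (MvPolynomial σ K) p m =
      (map (iterateFrobenius K p m)).comp (expand (p ^ m)).toRingHom :=
    RingHom.ext fun f => (map_iterateFrobenius_expand p f m).symm
  rw [hfactor]
  exact (flat_expand (expChar_pow_pos K p m)).comp h.mvPolynomialMap

end MvPolynomial

/-- Over the polynomial ring `R = L[y₁, …, yₙ]` in `n` variables over a field `L` of prime
characteristic `p`, for every `m > 0` the ring `R` is flat as an `R`-module via restriction
of scalars along the `m`-fold composite of the Frobenius endomorphism `a ↦ a ^ p`. -/
theorem polynomialRing_flat_iterateFrobenius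
    (L : Type*) [Field L] (p : ℕ) [Fact p.Prime] [CharP L p] (n : ℕ) :
    ∀ m : ℕ, 0 < m → Module.Flat (MvPolynomial (Fin n) L) (FrobIter (MvPolynomial (Fin n) L) p m) := by
  intro m _
  -- `RingHom.Flat` is stated for the module structure `Module.compHom` that `FrobIter` carries.
  exact MvPolynomial.flat_iterateFrobenius p m (RingHom.Flat.of_field _)
end

section
/- Let R be a commutative ring with unity and M an R-module. If (x_1, …, x_t) ∈ R^t is an M-regular sequence, then for every integer n > 0 the tuple of n-th powers (x_1^n, …, x_t^n) is also an M-regular sequence. -/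
open RingTheory.Sequence Submodule Function Pointwise

section Aux

variable {R : Type*} [CommRing R]

private lemma mem_smul_top_iff_aux {M : Type*} [AddCommGroup M] [Module R M]
    (r : R) (m : M) : m ∈ (r • ⊤ : Submodule R M) ↔ ∃ m', r • m' = m := by
  constructor
  · intro hm
    have hm' : m ∈ (r • ((⊤ : Submodule R M) : Set M)) := by
      rw [← Submodule.coe_pointwise_smul]; exact hm
    obtain ⟨m', -, rfl⟩ := Set.mem_smul_set.mp hm'
    exact ⟨m', rfl⟩
  · rintro ⟨m', rfl⟩
    exact Submodule.smul_mem_pointwise_smul m' r ⊤ trivial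

/-- If `0 → N → M → P → 0` is a short exact sequence and `rs` is weakly regular
on both `N` and `P`, then it is weakly regular on `M`. -/
private lemma isWeaklyRegular_of_ses
    {N M P : Type*} [AddCommGroup N] [AddCommGroup M] [AddCommGroup P]
    [Module R N] [Module R M] [Module R P]
    (f : N →ₗ[R] M) (g : M →ₗ[R] P) (hf : Function.Injective f)
    (hg : Function.Surjective g) (hfg : Function.Exact f g)
    (rs : List R) (hN : IsWeaklyRegular N rs) (hP : IsWeaklyRegular P rs) :
    IsWeaklyRegular M rs := by
  induction rs generalizing N M P with
  | nil => exact .nil R M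
  | cons r rs ih =>
    rw [isWeaklyRegular_cons_iff] at hN hP ⊢
    obtain ⟨hN1, hN2⟩ := hN
    obtain ⟨hP1, hP2⟩ := hP
    have hM1 : IsSMulRegular M r := by
      intro a b hab
      have h1 : r • (a - b) = 0 := by
        rw [smul_sub, sub_eq_zero]; exact hab
      have h2 : g (a - b) = 0 := hP1 (show r • g (a - b) = r • 0 by
        rw [smul_zero, ← map_smul, h1, map_zero])
      obtain ⟨nv, hnv⟩ := (hfg _).mp h2
      have h3 : f (r • nv) = 0 := by rw [map_smul, hnv, h1]
      have h4 : r • nv = 0 := by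
        apply hf; rw [h3, map_zero]
      have h5 : nv = 0 := hN1 (show r • nv = r • 0 by rw [smul_zero, h4])
      have : a - b = 0 := by rw [← hnv, h5, map_zero]
      exact sub_eq_zero.mp this
    have hfq : Function.Injective (QuotSMulTop.map r f) := by
      have hex0 : Function.Exact (0 : P →ₗ[R] N) f := fun y =>
        ⟨fun hy => ⟨0, (hf (show f y = f 0 by rw [hy, map_zero])).symm⟩,
         fun ⟨c, hc⟩ => by rw [← hc]; simp⟩
      have hkey := QuotSMulTop.map_first_exact_on_four_term_exact_of_isSMulRegular_last
        (f₁ := (0 : P →ₗ[R] N)) (f₂ := f) (f₃ := g) hex0 hfg hP1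
      intro a b hab
      obtain ⟨c, hc⟩ := (hkey (a - b)).mp (by rw [map_sub, hab, sub_self])
      rw [map_zero (QuotSMulTop.map r)] at hc
      have : (0 : QuotSMulTop r P →ₗ[R] QuotSMulTop r N) c = a - b := hc
      rw [LinearMap.zero_apply] at this
      exact sub_eq_zero.mp this.symm
    exact ⟨hM1, ih (QuotSMulTop.map r f) (QuotSMulTop.map r g) hfq
      (QuotSMulTop.map_surjective r hg) (QuotSMulTop.map_exact r hfg hg) hN2 hP2⟩

/-- If `x` is regular on `M` and `rs` is weakly regular on `M/xM`, then `rs` is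
weakly regular on `M/xᵏM` for every `k ≥ 1`. -/
private lemma isWeaklyRegular_quot_pow
    {M : Type*} [AddCommGroup M] [Module R M] {x : R}
    (hx : IsSMulRegular M x) (rs : List R)
    (h : IsWeaklyRegular (QuotSMulTop x M) rs) :
    ∀ k, 0 < k → IsWeaklyRegular (QuotSMulTop (x ^ k) M) rs := by
  intro k hk
  induction k with
  | zero => omega
  | succ k ih =>
    rcases Nat.eq_zero_or_pos k with hk0 | hk0
    · subst hk0
      have e : (M ⧸ ((x : R) • ⊤ : Submodule R M)) ≃ₗ[R]
          (M ⧸ ((x ^ 1 : R) • ⊤ : Submodule R M)) :=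
        Submodule.quotEquivOfEq _ _ (by rw [pow_one])
      exact (e.isWeaklyRegular_congr rs).mp h
    · -- short exact sequence  M/xM → M/x^{k+1}M → M/x^kM
      have hxk : IsSMulRegular M (x ^ k) := hx.pow k
      set p : ℕ → Submodule R M := fun i => (x ^ i : R) • ⊤ with hp
      have hcond1 : p 1 ≤ LinearMap.ker ((p (k+1)).mkQ ∘ₗ LinearMap.lsmul R M (x ^ k)) := by
        intro m hm
        obtain ⟨m', rfl⟩ := (mem_smul_top_iff_aux (x ^ 1) m).mp hm
        simp only [LinearMap.mem_ker, LinearMap.comp_apply, LinearMap.lsmul_apply,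
          Submodule.mkQ_apply, Submodule.Quotient.mk_eq_zero]
        refine (mem_smul_top_iff_aux (x ^ (k+1)) _).mpr ⟨m', ?_⟩
        rw [smul_smul, ← pow_add]
      have hcond2' : p (k+1) ≤ LinearMap.ker (p k).mkQ := by
        intro m hm
        obtain ⟨m', rfl⟩ := (mem_smul_top_iff_aux (x ^ (k+1)) m).mp hm
        simp only [LinearMap.mem_ker, Submodule.mkQ_apply, Submodule.Quotient.mk_eq_zero]
        refine (mem_smul_top_iff_aux (x ^ k) _).mpr ⟨x • m', ?_⟩
        rw [smul_smul, ← pow_succ]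
      set f : (M ⧸ p 1) →ₗ[R] (M ⧸ p (k+1)) :=
        Submodule.liftQ (p 1) ((p (k+1)).mkQ ∘ₗ LinearMap.lsmul R M (x ^ k)) hcond1 with hfdef
      set g : (M ⧸ p (k+1)) →ₗ[R] (M ⧸ p k) :=
        Submodule.liftQ (p (k+1)) (p k).mkQ hcond2' with hgdef
      have hfmk : ∀ m : M, f (Submodule.Quotient.mk m) =
          Submodule.Quotient.mk ((x ^ k) • m) := fun m => rfl
      have hgmk : ∀ m : M, g (Submodule.Quotient.mk m) = Submodule.Quotient.mk m :=
        fun m => rfl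
      have hfinj : Function.Injective f := by
        rw [← LinearMap.ker_eq_bot, eq_bot_iff]
        intro y hy
        obtain ⟨m, rfl⟩ := (p 1).mkQ_surjective y
        rw [LinearMap.mem_ker, Submodule.mkQ_apply, hfmk,
          Submodule.Quotient.mk_eq_zero] at hy
        obtain ⟨m', hm'⟩ := (mem_smul_top_iff_aux (x ^ (k+1)) _).mp hy
        have : (x ^ k) • (x • m') = (x ^ k) • m := by
          rw [← hm', smul_smul, ← pow_succ]
        have hmx : x • m' = m := hxk this
        simp only [Submodule.mem_bot, Submodule.mkQ_apply, Submodule.Quotient.mk_eq_zero]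
        exact (mem_smul_top_iff_aux (x ^ 1) _).mpr ⟨m', by rw [pow_one, hmx]⟩
      have hgsurj : Function.Surjective g := by
        intro y
        obtain ⟨m, rfl⟩ := (p k).mkQ_surjective y
        exact ⟨Submodule.Quotient.mk m, hgmk m⟩
      have hexact : Function.Exact f g := by
        intro y
        constructor
        · intro hy
          obtain ⟨m, rfl⟩ := (p (k+1)).mkQ_surjective y
          rw [Submodule.mkQ_apply, hgmk, Submodule.Quotient.mk_eq_zero] at hy
          obtain ⟨m', rfl⟩ := (mem_smul_top_iff_aux (x ^ k) m).mp hy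
          exact ⟨Submodule.Quotient.mk m', (hfmk m')⟩
        · rintro ⟨z, rfl⟩
          obtain ⟨m, rfl⟩ := (p 1).mkQ_surjective z
          rw [Submodule.mkQ_apply, hfmk, hgmk, Submodule.Quotient.mk_eq_zero]
          exact (mem_smul_top_iff_aux (x ^ k) _).mpr ⟨m, rfl⟩
      have h1 : IsWeaklyRegular (M ⧸ p 1) rs :=
        ((Submodule.quotEquivOfEq ((x : R) • ⊤) (p 1)
          (by rw [hp]; simp [pow_one])).isWeaklyRegular_congr rs).mp h
      exact isWeaklyRegular_of_ses f g hfinj hgsurj hexact rs h1 (ih hk0)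

private lemma isWeaklyRegular_pow_aux
    {M : Type*} [AddCommGroup M] [Module R M]
    (xs : List R) (n : ℕ) (hn : 0 < n)
    (h : IsWeaklyRegular M xs) :
    IsWeaklyRegular M (xs.map (· ^ n)) := by
  induction xs generalizing M with
  | nil => exact .nil R M
  | cons x rs ih =>
    rw [List.map_cons, isWeaklyRegular_cons_iff] at *
    obtain ⟨hx, hrest⟩ := h
    exact ⟨hx.pow n, isWeaklyRegular_quot_pow hx _ (ih hrest) n hn⟩

end Aux

/-- If `(x₁, …, x_t)` is an `M`-regular sequence over a commutative ring `R`, then for every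
`n > 0` the sequence of `n`-th powers `(x₁ⁿ, …, x_tⁿ)` is also an `M`-regular sequence. -/
theorem isRegular_pow_of_isRegular
    (R : Type*) [CommRing R] (M : Type*) [AddCommGroup M] [Module R M]
    (xs : List R) (n : ℕ) (hn : 0 < n)
    (h : RingTheory.Sequence.IsRegular M xs) :
    RingTheory.Sequence.IsRegular M (xs.map (· ^ n)) := by
  rw [RingTheory.Sequence.isRegular_iff] at h ⊢
  obtain ⟨hw, hne⟩ := h
  refine ⟨isWeaklyRegular_pow_aux xs n hn hw, ?_⟩
  intro htop
  apply hne
  have hle : Ideal.ofList (xs.map (· ^ n)) ≤ Ideal.ofList xs := by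
    rw [Ideal.ofList, Ideal.span_le]
    intro y hy
    simp only [List.mem_map, Set.mem_setOf_eq] at hy
    obtain ⟨x, hx, rfl⟩ := List.mem_map.mp (by simpa using hy)
    have hxmem : x ∈ Ideal.ofList xs := Ideal.subset_span (by simpa using hx)
    obtain ⟨m, rfl⟩ := Nat.exists_eq_succ_of_ne_zero hn.ne'
    exact SetLike.mem_coe.mpr (by rw [pow_succ]; exact Ideal.mul_mem_left _ _ hxmem)
  exact le_antisymm (htop.le.trans (Submodule.smul_mono_left hle)) le_top
end

section
/- Let R be a commutative ring with unity and M an R-module. If (x_1, …, x_t) ∈ R^t is an M-regular sequence, then for every integer n > 0 the tuple (x_1, …, x_{t−1}, x_t^n), obtained by replacing the last entry by its n-th power, is also an M-regular sequence. -/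
namespace RingTheory.Sequence

variable {R M : Type*} [CommRing R] [AddCommGroup M] [Module R M]

lemma _root_.Ideal.ofList_append_singleton_le_of_dvd (rs : List R) {a b : R} (hab : a ∣ b) :
    Ideal.ofList (rs ++ [b]) ≤ Ideal.ofList (rs ++ [a]) := by
  simp only [Ideal.ofList_append, Ideal.ofList_singleton]
  exact sup_le_sup_left (Ideal.span_singleton_le_span_singleton.mpr hab) _

lemma IsWeaklyRegular.append_singleton_pow {rs : List R} {y : R}
    (h : IsWeaklyRegular M (rs ++ [y])) (n : ℕ) : IsWeaklyRegular M (rs ++ [y ^ n]) := by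
  rw [isWeaklyRegular_append_iff, isWeaklyRegular_singleton_iff] at h ⊢
  exact ⟨h.1, h.2.pow n⟩

/-- Shrinking the ideal can only make the quotient module larger. -/
lemma IsRegular.of_isWeaklyRegular_of_ofList_le {rs rs' : List R} (h : IsRegular M rs)
    (hw : IsWeaklyRegular M rs') (hle : Ideal.ofList rs' ≤ Ideal.ofList rs) :
    IsRegular M rs' where
  toIsWeaklyRegular := hw
  top_ne_smul htop := h.top_ne_smul <|
    le_antisymm (htop.le.trans (Submodule.smul_mono_left hle)) le_top

end RingTheory.Sequence

/-- If `(x₁, …, x_t)` is an `M`-regular sequence over a commutative ring `R`, then for every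
`n > 0` the sequence `(x₁, …, x_{t-1}, x_tⁿ)`, obtained by replacing the last entry by its
`n`-th power, is also an `M`-regular sequence. -/
theorem isRegular_append_pow_last_of_isRegular
    (R : Type*) [CommRing R] (M : Type*) [AddCommGroup M] [Module R M]
    (xs : List R) (y : R) (n : ℕ) (hn : 0 < n)
    (h : RingTheory.Sequence.IsRegular M (xs ++ [y])) :
    RingTheory.Sequence.IsRegular M (xs ++ [y ^ n]) :=
  h.of_isWeaklyRegular_of_ofList_le (h.toIsWeaklyRegular.append_singleton_pow n)
    (Ideal.ofList_append_singleton_le_of_dvd xs (dvd_pow_self y hn.ne'))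
end
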